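/- For every n ≥ 2 and every k with 0 ≤ k ≤ n-2, the number a(n,k) of elements of A_n of length k equals the number of permutations v of {1,…,n} with exactly n-k cycles (including fixed points) such that 1 and 2 lie in different cycles of v; i.e., a(n,k) = |P(n,n-k)| where P(n,j) = {v ∈ S_n : cyc(v) = j and 1, 2 are in different cycles of v}. (Equivalently, a(n,k) equals the 2-restricted unsigned Stirling number of the first kind [n, n-k]₂.) -/

import Mathlib

/-- The set `T(A_n) = {(1 2)(i j) : 1 ≤ i < j ≤ n}` of A-transpositions, viewed inside
`Equiv.Perm (Fin n)` (letter `k` corresponds to `(k-1 : Fin n)`). -/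
def ATrans (n : ℕ) : Set (Equiv.Perm (Fin n)) :=
  {v | ∃ (h1 : 1 < n) (i j : Fin n), i < j ∧
       v = Equiv.swap (⟨0, by omega⟩ : Fin n) ⟨1, h1⟩ * Equiv.swap i j}

/-- Length of a permutation with respect to the generating set `T(A_n)`. -/
noncomputable def alen (n : ℕ) (v : Equiv.Perm (Fin n)) : ℕ :=
  sInf {k | ∃ l : List (Equiv.Perm (Fin n)),
    (∀ x ∈ l, x ∈ ATrans n) ∧ l.length = k ∧ l.prod = v}

/-- `a(n,m)`: the number of elements of `A_n` of length `m` w.r.t. `T(A_n)`. -/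
noncomputable def aCount (n m : ℕ) : ℕ :=
  Nat.card {v : Equiv.Perm (Fin n) // v ∈ alternatingGroup (Fin n) ∧ alen n v = m}

/-- `cyc(v)`: the number of cycles of `v` including fixed points, i.e. the number of
orbits of the cyclic group generated by `v` acting on `Fin n`. -/
noncomputable def cycNum (n : ℕ) (v : Equiv.Perm (Fin n)) : ℕ :=
  Nat.card (MulAction.orbitRel.Quotient (Subgroup.zpowers v) (Fin n))

/-!
Multiplying a permutation by a transposition `(a b)` changes its number of cycles by one: it
splits the cycle through `a` and `b` if they share one, and merges their two cycles otherwise.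
Hence a product of `k` transpositions has at least `n - k` cycles, and `w` is a product of
`n - cyc w` transpositions. Writing the letters of `T(A_n)` as `s t` with `s = (1 2)` and `t` a
transposition, and moving every `s` to the front by conjugation, a word of length `k` in
`T(A_n)` with value `v` is the same as a product of `k` transpositions with value `sᵏ v`.
For even `v`, exactly one `w` of `v, s v` has `1` and `2` in different cycles; it has the larger
number of cycles, and parity forces `ℓ(v) = n - cyc w`. The map `v ↦ w` is a bijection from
`A_n` onto the permutations in which `1` and `2` lie in different cycles (the inverse picks the
even one of `w, s w`).
-/

open Equiv Equiv.Perm MulAction Subgroup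
open scoped Pointwise

theorem Setoid.card_quotient_eq_card_quotient_add_one {α : Type*} [Finite α] {r r' : Setoid α}
    {a b : α} (hab : ¬ r a b)
    (h : ∀ x y, r' x y ↔ r x y ∨ (r x a ∧ r b y) ∨ (r x b ∧ r a y)) :
    Nat.card (Quotient r) = Nat.card (Quotient r') + 1 := by
  classical
  have hle : ∀ x y, r x y → r' x y := fun x y hxy => (h x y).2 (Or.inl hxy)
  let f : Quotient r → Option (Quotient r') := Quotient.lift
    (fun x => if r b x then none else some ⟦x⟧) fun x y (hxy : r x y) => by
      by_cases hbx : r b x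
      · simp [hbx, r.trans' hbx hxy]
      · have hby : ¬ r b y := fun hby => hbx (r.trans' hby (r.symm' hxy))
        simp [hbx, hby, Quotient.sound (hle x y hxy)]
  have hf : Function.Bijective f := by
    refine ⟨?_, fun p => ?_⟩
    · rintro ⟨x⟩ ⟨y⟩ hxy
      change (if r b x then none else some ⟦x⟧) = (if r b y then none else some ⟦y⟧) at hxy
      apply Quotient.sound
      by_cases hbx : r b x <;> by_cases hby : r b y <;> simp only [hbx, hby, if_true, if_false,
        reduceCtorEq, Option.some_inj] at hxy
      · exact r.trans' (r.symm' hbx) hby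
      · rcases (h x y).1 (Quotient.exact hxy) with hxy | ⟨-, hby'⟩ | ⟨hxb, -⟩
        · exact hxy
        · exact absurd hby' hby
        · exact absurd (r.symm' hxb) hbx
    · rcases p with _ | ⟨⟨x⟩⟩
      · exact ⟨⟦b⟧, if_pos (r.refl' b)⟩
      by_cases hbx : r b x
      · refine ⟨⟦a⟧, (if_neg fun hba => hab (r.symm' hba)).trans ?_⟩
        exact congrArg some (Quotient.sound ((h a x).2 (Or.inr (Or.inl ⟨r.refl' a, hbx⟩))))
      · exact ⟨⟦x⟧, if_neg hbx⟩
  rw [Nat.card_congr (Equiv.ofBijective f hf), Finite.card_option]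

section Words

variable {M : Type*} [Monoid M]

def IsProdOfLength (T : Set M) (k : ℕ) (g : M) : Prop :=
  ∃ l : List M, (∀ x ∈ l, x ∈ T) ∧ l.length = k ∧ l.prod = g

noncomputable def wordLength (T : Set M) (g : M) : ℕ :=
  sInf {k | IsProdOfLength T k g}

theorem isProdOfLength_zero {T : Set M} {g : M} : IsProdOfLength T 0 g ↔ g = 1 := by
  constructor
  · rintro ⟨l, -, hl, rfl⟩
    rw [List.length_eq_zero_iff.1 hl, List.prod_nil]
  · rintro rfl
    exact ⟨[], by simp, rfl, rfl⟩

theorem isProdOfLength_succ {T : Set M} {k : ℕ} {g : M} :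
    IsProdOfLength T (k + 1) g ↔ ∃ t ∈ T, ∃ h, IsProdOfLength T k h ∧ t * h = g := by
  constructor
  · rintro ⟨_ | ⟨t, l⟩, hT, hl, rfl⟩
    · simp at hl
    · simp only [List.mem_cons, forall_eq_or_imp] at hT
      exact ⟨t, hT.1, l.prod, ⟨l, hT.2, by simpa using hl, rfl⟩, List.prod_cons.symm⟩
  · rintro ⟨t, ht, _, ⟨l, hT, rfl, rfl⟩, rfl⟩
    exact ⟨t :: l, by simpa [ht] using hT, rfl, List.prod_cons⟩

-- `(s t₁) ⋯ (s tₖ) = sᵏ t₁' ⋯ tₖ'` with `tᵢ'` conjugate to `tᵢ` by a power of `s`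
theorem isProdOfLength_image_mul_left_iff {G : Type*} [Group G] {T : Set G} {s : G}
    (hs : s * s = 1) (hT : ∀ t ∈ T, s * t * s ∈ T) (k : ℕ) (g : G) :
    IsProdOfLength ((s * ·) '' T) k g ↔ IsProdOfLength T k (s ^ k * g) := by
  induction k generalizing g with
  | zero => rw [pow_zero, one_mul, isProdOfLength_zero, isProdOfLength_zero]
  | succ k ih =>
    have hconj : ∀ t ∈ T, s ^ k * t * s ^ k ∈ T := by
      clear ih
      induction k with
      | zero => simp
      | succ k ihk =>
        intro t ht
        have : s ^ (k + 1) * t * s ^ (k + 1) = s * (s ^ k * t * s ^ k) * s := by group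
        exact this ▸ hT _ (ihk t ht)
    simp only [isProdOfLength_succ, Set.exists_mem_image, ih]
    constructor
    · rintro ⟨t, ht, h, hh, rfl⟩
      refine ⟨s ^ k * t * s ^ k, hconj t ht, s ^ k * h, hh, ?_⟩
      calc s ^ k * t * s ^ k * (s ^ k * h) = s ^ k * t * (s ^ k * s ^ k) * h := by group
        _ = s ^ k * (s * s) * t * h := by rw [pow_mul_pow_eq_one _ hs, hs]; group
        _ = s ^ (k + 1) * (s * t * h) := by group
    · rintro ⟨t, ht, h, hh, hg⟩
      refine ⟨s ^ k * t * s ^ k, hconj t ht, s ^ k * h, ?_, ?_⟩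
      · rwa [← mul_assoc, pow_mul_pow_eq_one _ hs, one_mul]
      · calc s * (s ^ k * t * s ^ k) * (s ^ k * h) = s ^ (k + 1) * t * (s ^ k * s ^ k) * h := by
              group
          _ = s ^ (k + 1) * (s ^ (k + 1) * g) := by
              rw [pow_mul_pow_eq_one _ hs, mul_one, mul_assoc, hg]
          _ = g := by rw [← mul_assoc, pow_mul_pow_eq_one _ hs, one_mul]

end Words

namespace Function.Involutive

variable {X : Type*} {σ : X → X} {p q : X → Prop} [DecidablePred p] [DecidablePred q]

def transversalEquiv (hσ : Involutive σ) (hp : ∀ x, p (σ x) ↔ ¬ p x)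
    (hq : ∀ x, q (σ x) ↔ ¬ q x) : {x // p x} ≃ {x // q x} where
  toFun x := if h : q x then ⟨x, h⟩ else ⟨σ x, (hq x).2 h⟩
  invFun y := if h : p y then ⟨y, h⟩ else ⟨σ y, (hp y).2 h⟩
  left_inv := by
    rintro ⟨x, hx⟩
    by_cases h : q x
    · simp only [dif_pos h, dif_pos hx]
    · simp only [dif_neg h, dif_neg (not_not_intro hx ∘ (hp x).1)]
      exact Subtype.ext (hσ x)
  right_inv := by
    rintro ⟨y, hy⟩
    by_cases h : p y
    · simp only [dif_pos h, dif_pos hy]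
    · simp only [dif_neg h, dif_neg (not_not_intro hy ∘ (hq y).1)]
      exact Subtype.ext (hσ y)

theorem transversalEquiv_apply_eq_or (hσ : Involutive σ) (hp : ∀ x, p (σ x) ↔ ¬ p x)
    (hq : ∀ x, q (σ x) ↔ ¬ q x) (x : {x // p x}) :
    (hσ.transversalEquiv hp hq x : X) = x ∨ (hσ.transversalEquiv hp hq x : X) = σ x := by
  unfold transversalEquiv
  dsimp only [Equiv.coe_fn_mk]
  split_ifs
  exacts [Or.inl rfl, Or.inr rfl]

end Function.Involutive

namespace Equiv.Perm

variable {α : Type*}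

noncomputable def numCycles (σ : Perm α) : ℕ :=
  Nat.card (orbitRel.Quotient (zpowers σ) α)

theorem orbitRel_zpowers_iff {σ : Perm α} {x y : α} :
    orbitRel (zpowers σ) α x y ↔ σ.SameCycle x y := by
  rw [orbitRel_apply, sameCycle_comm]
  constructor
  · rintro ⟨⟨g, hg⟩, rfl⟩
    obtain ⟨i, rfl⟩ := mem_zpowers_iff.mp hg
    exact ⟨i, rfl⟩
  · rintro ⟨i, rfl⟩
    exact ⟨⟨σ ^ i, zpow_mem_zpowers σ i⟩, rfl⟩

theorem numCycles_le_card [Fintype α] (σ : Perm α) : numCycles σ ≤ Fintype.card α := by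
  rw [← Nat.card_eq_fintype_card]
  exact Nat.card_le_card_of_surjective _ Quotient.mk''_surjective

theorem numCycles_one [Fintype α] : numCycles (1 : Perm α) = Fintype.card α := by
  have hinj : Function.Injective (Quotient.mk (orbitRel (zpowers (1 : Perm α)) α)) :=
    fun x y hxy => sameCycle_one.mp (orbitRel_zpowers_iff.mp (Quotient.exact hxy))
  rw [← Nat.card_eq_fintype_card, numCycles,
    ← Nat.card_congr (Equiv.ofBijective _ ⟨hinj, Quotient.mk_surjective⟩)]

theorem sameCycle_iff_exists_lt_of_pow_apply_eq_self {f : Perm α} {x y : α} {q : ℕ} (hq : 0 < q)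
    (hx : (f ^ q) x = x) : f.SameCycle x y ↔ ∃ j < q, (f ^ j) x = y := by
  refine ⟨fun ⟨i, hi⟩ => ?_, fun ⟨j, _, hj⟩ => ⟨j, by simpa using hj⟩⟩
  have hq' : (0 : ℤ) < q := by exact_mod_cast hq
  have hmod : 0 ≤ i % q := Int.emod_nonneg i hq'.ne'
  have hlt : i % q < q := Int.emod_lt_of_pos i hq'
  refine ⟨(i % q).toNat, by omega, ?_⟩
  have hperiod : ((f ^ (q : ℤ)) ^ (i / q)) x = x :=
    zpow_apply_eq_self_of_apply_eq_self (by rwa [zpow_natCast]) _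
  rw [← hi, ← zpow_natCast, Int.toNat_of_nonneg hmod]
  conv_rhs => rw [← Int.emod_add_mul_ediv i q, zpow_add, zpow_mul, mul_apply, hperiod]

theorem sameCycle_swap_mul_iff [Finite α] [DecidableEq α] {w : Perm α} {a b : α}
    (hab : a ≠ b) :
    (swap a b * w).SameCycle a b ↔ ¬ w.SameCycle a b := by
  set u := swap a b * w
  rw [sameCycle_comm (f := u), sameCycle_comm (f := w)]
  -- follow the `w`-orbit of `b` to its first return `q` to `{a, b}`; until then `u` agrees with `w`
  have hex : ∃ q, 0 < q ∧ ((w ^ q) b = a ∨ (w ^ q) b = b) :=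
    ⟨orderOf w, orderOf_pos w, Or.inr (by rw [pow_orderOf_eq_one, one_apply])⟩
  obtain ⟨hq, hret⟩ := Nat.find_spec hex
  set q := Nat.find hex
  have hmiss : ∀ j < q, (w ^ j) b ≠ a ∧ (0 < j → (w ^ j) b ≠ b) := by
    intro j hj
    rcases Nat.eq_zero_or_pos j with rfl | hj0
    · exact ⟨hab.symm, by omega⟩
    · have := Nat.find_min hex hj
      tauto
  have hagree : ∀ j < q, (u ^ j) b = (w ^ j) b := by
    intro j hj
    induction j with
    | zero => rfl
    | succ j ih =>
      rw [pow_succ', mul_apply, ih (by omega), mul_apply, ← mul_apply w, ← pow_succ']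
      exact swap_apply_of_ne_of_ne (hmiss _ hj).1 ((hmiss _ hj).2 (by omega))
  have hq_eq : (u ^ q) b = swap a b ((w ^ q) b) := by
    obtain ⟨j, hj⟩ : ∃ j, q = j + 1 := ⟨q - 1, by omega⟩
    rw [hj, pow_succ', mul_apply, hagree j (by omega), mul_apply, ← mul_apply w, ← pow_succ']
  rcases hret with hwa | hwb
  · have hub : (u ^ q) b = b := by rw [hq_eq, hwa, swap_apply_left]
    rw [sameCycle_iff_exists_lt_of_pow_apply_eq_self hq hub]
    refine iff_of_false ?_ (not_not_intro ⟨q, by simpa using hwa⟩)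
    rintro ⟨j, hj, hja⟩
    exact (hmiss j hj).1 (by rwa [← hagree j hj])
  · have hua : (u ^ q) b = a := by rw [hq_eq, hwb, swap_apply_right]
    rw [sameCycle_iff_exists_lt_of_pow_apply_eq_self hq hwb]
    refine iff_of_true ⟨q, by simpa using hua⟩ ?_
    rintro ⟨j, hj, hja⟩
    exact (hmiss j hj).1 hja

section Merge

variable [DecidableEq α]

theorem orbitRel_closure_swap_iff {w : Perm α} {a b x y : α} :
    orbitRel (closure {w, swap a b}) α x y ↔ w.SameCycle x y ∨
      (w.SameCycle x a ∧ w.SameCycle b y) ∨ (w.SameCycle x b ∧ w.SameCycle a y) := by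
  let S : Set α := {z | w.SameCycle z y ∨
      (w.SameCycle z a ∧ w.SameCycle b y) ∨ (w.SameCycle z b ∧ w.SameCycle a y)}
  have hw : w ∈ stabilizer (Perm α) S :=
    mem_stabilizer_set.2 fun z => by simp [S, sameCycle_apply_left]
  have hab : a ∈ S ↔ b ∈ S := by
    simp only [S, Set.mem_ofPred_eq, SameCycle.refl, true_and]
    tauto
  have hτ : swap a b ∈ stabilizer (Perm α) S := mem_stabilizer_set.2 fun z => by
    rw [Perm.smul_def, swap_apply_def]
    split_ifs with hza hzb
    · exact hza ▸ hab.symm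
    · exact hzb ▸ hab
    · rfl
  rw [orbitRel_apply]
  constructor
  · rintro ⟨⟨g, hg⟩, rfl⟩
    have hstab : closure {w, swap a b} ≤ stabilizer (Perm α) S :=
      (closure_le _).2 (Set.insert_subset hw (Set.singleton_subset_iff.2 hτ))
    exact (mem_stabilizer_set.1 (hstab hg) y).2 (Or.inl (SameCycle.refl w y))
  · have hpow (i : ℤ) : w ^ i ∈ closure {w, swap a b} :=
      zpow_mem (subset_closure (Set.mem_insert _ _)) i
    have hswap : swap a b ∈ closure {w, swap a b} := subset_closure (Set.mem_insert_of_mem _ rfl)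
    rintro (⟨i, hi⟩ | ⟨⟨i, hi⟩, ⟨j, hj⟩⟩ | ⟨⟨i, hi⟩, ⟨j, hj⟩⟩)
    · exact ⟨⟨w ^ (-i), hpow _⟩, by simp [← hi, ← mul_apply]⟩
    · refine ⟨⟨w ^ (-i) * swap a b * w ^ (-j), mul_mem (mul_mem (hpow _) hswap) (hpow _)⟩,
        ?_⟩
      have hi' : (w ^ (-i)) a = x := by rw [zpow_neg, inv_eq_iff_eq, hi]
      have hj' : (w ^ (-j)) y = b := by rw [zpow_neg, inv_eq_iff_eq, hj]
      change (w ^ (-i) * swap a b * w ^ (-j)) y = x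
      rw [mul_apply, mul_apply, hj', swap_apply_right, hi']
    · refine ⟨⟨w ^ (-i) * swap a b * w ^ (-j), mul_mem (mul_mem (hpow _) hswap) (hpow _)⟩,
        ?_⟩
      have hi' : (w ^ (-i)) b = x := by rw [zpow_neg, inv_eq_iff_eq, hi]
      have hj' : (w ^ (-j)) y = a := by rw [zpow_neg, inv_eq_iff_eq, hj]
      change (w ^ (-i) * swap a b * w ^ (-j)) y = x
      rw [mul_apply, mul_apply, hj', swap_apply_left, hi']

theorem closure_swap_mul_pair (w : Perm α) (a b : α) :
    closure {swap a b * w, swap a b} = closure {w, swap a b} := by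
  have key (v : Perm α) : closure {swap a b * v, swap a b} ≤ closure {v, swap a b} := by
    have hswap : swap a b ∈ closure {v, swap a b} := subset_closure (Set.mem_insert_of_mem _ rfl)
    refine (closure_le _).2 (Set.insert_subset ?_ (Set.singleton_subset_iff.2 hswap))
    exact mul_mem hswap (subset_closure (Set.mem_insert _ _))
  refine le_antisymm (key w) ?_
  simpa only [swap_mul_self_mul] using key (swap a b * w)

theorem card_quotient_closure_swap_of_sameCycle {w : Perm α} {a b : α} (h : w.SameCycle a b) :
    Nat.card (orbitRel.Quotient (closure {w, swap a b}) α) = numCycles w := by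
  refine Nat.card_congr (Quotient.congrRight fun x y => ?_)
  rw [orbitRel_closure_swap_iff, orbitRel_zpowers_iff]
  refine ⟨?_, Or.inl⟩
  rintro (hxy | ⟨hxa, hby⟩ | ⟨hxb, hay⟩)
  exacts [hxy, (hxa.trans h).trans hby, (hxb.trans h.symm).trans hay]

variable [Finite α]

theorem card_quotient_closure_swap_of_not_sameCycle {w : Perm α} {a b : α}
    (h : ¬ w.SameCycle a b) :
    Nat.card (orbitRel.Quotient (closure {w, swap a b}) α) + 1 = numCycles w := by
  refine (Setoid.card_quotient_eq_card_quotient_add_one (a := a) (b := b) ?_ fun x y => ?_).symm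
  · rwa [orbitRel_zpowers_iff]
  · simp only [orbitRel_closure_swap_iff, orbitRel_zpowers_iff]

theorem numCycles_swap_mul_add_one {w : Perm α} {a b : α} (hab : a ≠ b)
    (h : ¬ w.SameCycle a b) : numCycles (swap a b * w) + 1 = numCycles w := by
  rw [← card_quotient_closure_swap_of_sameCycle ((sameCycle_swap_mul_iff hab).2 h),
    closure_swap_mul_pair, card_quotient_closure_swap_of_not_sameCycle h]

theorem numCycles_swap_mul {w : Perm α} {a b : α} (hab : a ≠ b) (h : w.SameCycle a b) :
    numCycles (swap a b * w) = numCycles w + 1 := by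
  have h' : ¬ (swap a b * w).SameCycle a b := fun h' => (sameCycle_swap_mul_iff hab).1 h' h
  rw [← numCycles_swap_mul_add_one hab h', swap_mul_self_mul]

end Merge

section Swaps

variable [DecidableEq α]

def swapMulSwaps (a b : α) : Set (Perm α) :=
  (swap a b * ·) '' {t | t.IsSwap}

theorem isProdOfLength_swapMulSwaps_iff (a b : α) (k : ℕ) (v : Perm α) :
    IsProdOfLength (swapMulSwaps a b) k v ↔
      IsProdOfLength {t | t.IsSwap} k (swap a b ^ k * v) := by
  refine isProdOfLength_image_mul_left_iff (swap_mul_self a b) ?_ k v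
  rintro _ ⟨x, y, hxy, rfl⟩
  exact ⟨swap a b x, swap a b y, (swap a b).injective.ne hxy,
    by rw [swap_apply_apply, swap_inv]⟩

variable [Fintype α]

theorem numCycles_le_numCycles_swap_mul_add_one (w : Perm α) (a b : α) :
    numCycles w ≤ numCycles (swap a b * w) + 1 := by
  by_cases hab : a = b
  · simp [hab, swap_self, ← one_def]
  by_cases h : w.SameCycle a b
  · rw [numCycles_swap_mul hab h]
    omega
  · rw [numCycles_swap_mul_add_one hab h]

theorem card_le_numCycles_add_of_isProdOfLength {k : ℕ} {w : Perm α}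
    (h : IsProdOfLength {t | t.IsSwap} k w) : Fintype.card α ≤ numCycles w + k := by
  induction k generalizing w with
  | zero => rw [isProdOfLength_zero.1 h, numCycles_one, add_zero]
  | succ k ih =>
    obtain ⟨t, ⟨a, b, -, rfl⟩, v, hv, rfl⟩ := isProdOfLength_succ.1 h
    have := numCycles_le_numCycles_swap_mul_add_one v a b
    have := ih hv
    omega

theorem isProdOfLength_card_sub_numCycles (w : Perm α) :
    IsProdOfLength {t | t.IsSwap} (Fintype.card α - numCycles w) w := by
  induction hm : Fintype.card α - numCycles w using Nat.strong_induction_on generalizing w with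
  | _ m ih =>
    by_cases hw : w = 1
    · subst hw
      rw [numCycles_one, Nat.sub_self] at hm
      exact hm ▸ isProdOfLength_zero.2 rfl
    obtain ⟨x, hx⟩ : ∃ x, w x ≠ x := not_forall.1 fun h => hw (Equiv.ext h)
    have hsplit := numCycles_swap_mul (Ne.symm hx) (⟨1, rfl⟩ : w.SameCycle x (w x))
    have hle := numCycles_le_card (swap x (w x) * w)
    obtain ⟨m, rfl⟩ : ∃ m', m = m' + 1 := ⟨m - 1, by omega⟩
    exact isProdOfLength_succ.2 ⟨swap x (w x), ⟨x, w x, Ne.symm hx, rfl⟩, swap x (w x) * w,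
      ih m (by omega) _ (by omega), swap_mul_self_mul _ _ _⟩

theorem sign_eq_neg_one_pow_card_sub_numCycles (w : Perm α) :
    sign w = (-1) ^ (Fintype.card α - numCycles w) := by
  obtain ⟨l, hl, hlen, hw⟩ := isProdOfLength_card_sub_numCycles w
  rw [← hlen, ← sign_prod_list_swap hl, hw]

theorem wordLength_swapMulSwaps {a b : α} (hab : a ≠ b) {v w : Perm α}
    (hv : v ∈ alternatingGroup α) (hw : w = v ∨ w = swap a b * v) (hsc : ¬ w.SameCycle a b) :
    wordLength (swapMulSwaps a b) v = Fintype.card α - numCycles w := by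
  have hpow (k : ℕ) : swap a b ^ k * v = w ∨ swap a b ^ k * v = swap a b * w := by
    induction k with
    | zero => rcases hw with rfl | rfl <;> simp
    | succ k ih =>
      rw [pow_succ', mul_assoc]
      rcases ih with h | h <;> rw [h]
      exacts [Or.inr rfl, Or.inl (swap_mul_self_mul a b w)]
  have hmerge := numCycles_swap_mul_add_one hab hsc
  have hle := numCycles_le_card w
  -- for `m = card α - numCycles w`, both `swap a b ^ m * v` and `w` have sign `(-1) ^ m`
  have hm : swap a b ^ (Fintype.card α - numCycles w) * v = w := by
    refine (hpow _).resolve_right fun h => units_ne_neg_self (sign w) ?_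
    have := congrArg sign h
    rw [map_mul, map_pow, map_mul, sign_swap hab, mem_alternatingGroup.1 hv, mul_one,
      ← sign_eq_neg_one_pow_card_sub_numCycles, neg_one_mul] at this
    exact this
  have hmem : Fintype.card α - numCycles w ∈ {k | IsProdOfLength (swapMulSwaps a b) k v} := by
    rw [Set.mem_ofPred_eq, isProdOfLength_swapMulSwaps_iff, hm]
    exact isProdOfLength_card_sub_numCycles w
  refine le_antisymm (Nat.sInf_le hmem) (le_csInf ⟨_, hmem⟩ fun k hk => ?_)
  have := card_le_numCycles_add_of_isProdOfLength ((isProdOfLength_swapMulSwaps_iff a b k v).1 hk)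
  rcases hpow k with h | h <;> rw [h] at this <;> omega

theorem card_wordLength_eq_card_numCycles {a b : α} (hab : a ≠ b) {k : ℕ}
    (hk : k ≤ Fintype.card α) :
    Nat.card {v : Perm α // v ∈ alternatingGroup α ∧ wordLength (swapMulSwaps a b) v = k} =
      Nat.card {w : Perm α // numCycles w = Fintype.card α - k ∧ ¬ w.SameCycle a b} := by
  classical
  have hσ : Function.Involutive (swap a b * ·) := swap_mul_self_mul a b
  have hp (v : Perm α) : swap a b * v ∈ alternatingGroup α ↔ v ∉ alternatingGroup α := by
    simp only [mem_alternatingGroup, map_mul, sign_swap hab]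
    rcases Int.units_eq_one_or (sign v) with h | h <;> simp [h]
  have hq (w : Perm α) : ¬ (swap a b * w).SameCycle a b ↔ ¬ ¬ w.SameCycle a b :=
    (sameCycle_swap_mul_iff hab).not
  set e := hσ.transversalEquiv (q := fun w => ¬ w.SameCycle a b) hp hq
  have he (v : {v // v ∈ alternatingGroup α}) :
      wordLength (swapMulSwaps a b) v = k ↔
        numCycles (e v : Perm α) = Fintype.card α - k := by
    have hev : (e v : Perm α) = v ∨ (e v : Perm α) = swap a b * v :=
      hσ.transversalEquiv_apply_eq_or (q := fun w => ¬ w.SameCycle a b) hp hq v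
    rw [wordLength_swapMulSwaps hab v.2 hev (e v).2]
    have := numCycles_le_card (e v : Perm α)
    omega
  calc _ = Nat.card {v : {v // v ∈ alternatingGroup α} //
          wordLength (swapMulSwaps a b) v = k} :=
        Nat.card_congr (subtypeSubtypeEquivSubtypeInter _ _).symm
    _ = Nat.card {w : {w : Perm α // ¬ w.SameCycle a b} //
          numCycles (w : Perm α) = Fintype.card α - k} :=
        Nat.card_congr (e.subtypeEquiv he)
    _ = _ := Nat.card_congr ((subtypeSubtypeEquivSubtypeInter (fun w => ¬ w.SameCycle a b)
        (fun w => numCycles w = Fintype.card α - k)).trans (subtypeEquivRight fun _ => and_comm))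

end Swaps

end Equiv.Perm

theorem aTrans_eq_swapMulSwaps {n : ℕ} (h1 : 1 < n) :
    ATrans n = swapMulSwaps (⟨0, by omega⟩ : Fin n) ⟨1, h1⟩ := by
  ext v
  constructor
  · rintro ⟨-, i, j, hij, rfl⟩
    exact ⟨swap i j, ⟨i, j, hij.ne, rfl⟩, rfl⟩
  · rintro ⟨_, ⟨i, j, hij, rfl⟩, rfl⟩
    rcases hij.lt_or_gt with h | h
    · exact ⟨h1, i, j, h, rfl⟩
    · exact ⟨h1, j, i, h, by rw [swap_comm i j]⟩

/-- For `n ≥ 2` and `0 ≤ k ≤ n - 2`, `a(n,k)` equals the number of permutations of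
`{1,…,n}` with exactly `n - k` cycles in which `1` and `2` lie in different cycles
(the 2-restricted unsigned Stirling number of the first kind `[n, n-k]₂`). -/
theorem stmt_16 (n : ℕ) (hn : 2 ≤ n) (k : ℕ) (hk : k ≤ n - 2) :
    aCount n k = Nat.card {v : Equiv.Perm (Fin n) //
      cycNum n v = n - k ∧ ¬ v.SameCycle ⟨0, by omega⟩ ⟨1, by omega⟩} := by
  have h01 : (⟨0, by omega⟩ : Fin n) ≠ ⟨1, by omega⟩ := by simp
  have h := card_wordLength_eq_card_numCycles h01 (k := k) (by rw [Fintype.card_fin]; omega)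
  rw [Fintype.card_fin, ← aTrans_eq_swapMulSwaps] at h
  exact h
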